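/- arXiv:math-ph/0405034 — 3 statements merged into one kernel-verified Lean document; each statement's English description precedes it below -/
import Mathlib

section
/- The improper integral ∫_{-∞}^{0} (π/2 + arctan(s))² ds equals π ln 2. -/
/-!
Reflecting `s ↦ -s` turns the integrand into `(π/2 - arctan x)²` on `(0, ∞)`. Integrating by parts
twice gives the antiderivative
`x (π/2 - arctan x)² + (π/2 - arctan x) log (1 + x²) + ∫₀ˣ log (1 + t²) / (1 + t²) dt`,
whose first two terms vanish at `0` and at `∞` because `π/2 - arctan x = arctan x⁻¹ ≤ x⁻¹`.
The substitution `t = tan θ` turns the remaining integral into `-2 ∫₀^{π/2} log (cos θ) dθ = π log 2`.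
-/

open MeasureTheory Real Set Filter Topology intervalIntegral

lemma Real.arctan_le_self {x : ℝ} (hx : 0 ≤ x) : arctan x ≤ x := by
  simpa using le_tan (arctan_nonneg.mpr hx) (arctan_lt_pi_div_two x)

lemma Real.pi_div_two_sub_arctan_le_inv {x : ℝ} (hx : 0 < x) : π / 2 - arctan x ≤ x⁻¹ := by
  rw [← arctan_inv_of_pos hx]
  exact arctan_le_self (inv_nonneg.mpr hx.le)

lemma Real.pi_div_two_sub_arctan_nonneg (x : ℝ) : 0 ≤ π / 2 - arctan x :=
  sub_nonneg.mpr (arctan_lt_pi_div_two x).le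

lemma tendsto_mul_pi_div_two_sub_arctan_sq_atTop :
    Tendsto (fun x : ℝ => x * (π / 2 - arctan x) ^ 2) atTop (𝓝 0) := by
  refine squeeze_zero' ?_ ?_ tendsto_inv_atTop_zero
  · filter_upwards [eventually_ge_atTop 0] with x hx
    positivity
  · filter_upwards [eventually_gt_atTop 0] with x hx
    calc x * (π / 2 - arctan x) ^ 2 ≤ x * x⁻¹ ^ 2 := by
          gcongr
          · exact pi_div_two_sub_arctan_nonneg x
          · exact pi_div_two_sub_arctan_le_inv hx
      _ = x⁻¹ := by field_simp

lemma tendsto_log_one_add_sq_div_atTop :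
    Tendsto (fun x : ℝ => log (1 + x ^ 2) / x) atTop (𝓝 0) := by
  have hlog : Tendsto (fun x : ℝ => 3 * (log x / x)) atTop (𝓝 0) := by
    simpa using (isLittleO_log_id_atTop.tendsto_div_nhds_zero).const_mul 3
  refine squeeze_zero' ?_ ?_ hlog
  · filter_upwards [eventually_ge_atTop 0] with x hx
    exact div_nonneg (log_nonneg (by nlinarith)) hx
  · filter_upwards [eventually_ge_atTop 2] with x hx
    have hcube : 1 + x ^ 2 ≤ x ^ 3 := by nlinarith
    calc log (1 + x ^ 2) / x ≤ log (x ^ 3) / x := by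
          gcongr
      _ = 3 * (log x / x) := by rw [log_pow]; push_cast; ring

lemma tendsto_pi_div_two_sub_arctan_mul_log_atTop :
    Tendsto (fun x : ℝ => (π / 2 - arctan x) * log (1 + x ^ 2)) atTop (𝓝 0) := by
  refine squeeze_zero' ?_ ?_ tendsto_log_one_add_sq_div_atTop
  · filter_upwards with x
    exact mul_nonneg (pi_div_two_sub_arctan_nonneg x) (log_nonneg (by nlinarith))
  · filter_upwards [eventually_gt_atTop 0] with x hx
    calc (π / 2 - arctan x) * log (1 + x ^ 2) ≤ x⁻¹ * log (1 + x ^ 2) := by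
          gcongr
          · exact log_nonneg (by nlinarith)
          · exact pi_div_two_sub_arctan_le_inv hx
      _ = log (1 + x ^ 2) / x := by ring

lemma integral_log_cos_zero_pi_div_two : ∫ x in 0..π / 2, log (cos x) = -log 2 * π / 2 := by
  have := integral_comp_sub_left (fun x => log (sin x)) (π / 2) (a := 0) (b := π / 2)
  simp only [sin_pi_div_two_sub, sub_self, sub_zero] at this
  rw [this, integral_log_sin_zero_pi_div_two]

lemma integral_log_one_add_sq_div_one_add_sq (x : ℝ) :
    ∫ t in 0..x, log (1 + t ^ 2) / (1 + t ^ 2) = -2 * ∫ θ in 0..arctan x, log (cos θ) := by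
  have hsubst := integral_comp_mul_deriv' (a := 0) (b := x) (g := fun θ => -2 * log (cos θ))
    (fun t _ => hasDerivAt_arctan t) (by fun_prop (disch := intro _ _; positivity)) ?_
  · rw [arctan_zero, intervalIntegral.integral_const_mul] at hsubst
    rw [← hsubst]
    congr 1 with t
    simp only [Function.comp_apply, cos_arctan, one_div, log_inv,
      log_sqrt (by positivity : (0 : ℝ) ≤ 1 + t ^ 2)]
    ring
  · refine ContinuousOn.mul continuousOn_const (continuousOn_cos.log ?_)
    rintro _ ⟨t, _, rfl⟩
    exact (cos_arctan_pos t).ne'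

lemma tendsto_integral_log_one_add_sq_div_one_add_sq_atTop :
    Tendsto (fun x => ∫ t in 0..x, log (1 + t ^ 2) / (1 + t ^ 2)) atTop (𝓝 (π * log 2)) := by
  have hprim : Continuous fun b => ∫ θ in 0..b, log (cos θ) :=
    continuous_primitive (fun _ _ => intervalIntegrable_log_cos) 0
  have := ((hprim.tendsto (π / 2)).comp
    (tendsto_arctan_atTop.mono_right nhdsWithin_le_nhds)).const_mul (-2)
  have hlim : π * log 2 = -2 * ∫ θ in 0..π / 2, log (cos θ) := by
    rw [integral_log_cos_zero_pi_div_two]; ring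
  simpa only [hlim, integral_log_one_add_sq_div_one_add_sq, Function.comp_def] using this

lemma continuous_log_one_add_sq_div_one_add_sq :
    Continuous fun t : ℝ => log (1 + t ^ 2) / (1 + t ^ 2) := by
  have hpos : ∀ t : ℝ, 1 + t ^ 2 ≠ 0 := fun t => by positivity
  exact ((continuous_const.add (continuous_pow 2)).log hpos).div
    (continuous_const.add (continuous_pow 2)) hpos

lemma hasDerivAt_antiderivative_pi_div_two_sub_arctan_sq (x : ℝ) :
    HasDerivAt (fun x => x * (π / 2 - arctan x) ^ 2 + (π / 2 - arctan x) * log (1 + x ^ 2)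
      + ∫ t in 0..x, log (1 + t ^ 2) / (1 + t ^ 2)) ((π / 2 - arctan x) ^ 2) x := by
  have harccot : HasDerivAt (fun x => π / 2 - arctan x) (-(1 / (1 + x ^ 2))) x :=
    (hasDerivAt_arctan x).const_sub _
  have hlog : HasDerivAt (fun x : ℝ => log (1 + x ^ 2)) (2 * x / (1 + x ^ 2)) x := by
    simpa using ((hasDerivAt_pow 2 x).const_add 1).log (by positivity)
  have hint := continuous_log_one_add_sq_div_one_add_sq.integral_hasStrictDerivAt 0 x
  refine ((((hasDerivAt_id' x).mul (harccot.fun_pow 2)).add (harccot.mul hlog)).add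
    hint.hasDerivAt).congr_deriv ?_
  field_simp
  ring

lemma integral_Ioi_pi_div_two_sub_arctan_sq :
    ∫ x in Ioi (0 : ℝ), (π / 2 - arctan x) ^ 2 = π * log 2 := by
  have hlim := (tendsto_mul_pi_div_two_sub_arctan_sq_atTop.add
    tendsto_pi_div_two_sub_arctan_mul_log_atTop).add
    tendsto_integral_log_one_add_sq_div_one_add_sq_atTop
  rw [zero_add, zero_add] at hlim
  rw [integral_Ioi_of_hasDerivAt_of_nonneg'
    (fun x _ => hasDerivAt_antiderivative_pi_div_two_sub_arctan_sq x) (fun x _ => sq_nonneg _) hlim]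
  simp

theorem stmt1 :
    ∫ s in Set.Iic (0 : ℝ), (π / 2 + Real.arctan s) ^ 2 = π * Real.log 2 := by
  have hreflect : ∀ s, π / 2 + arctan s = π / 2 - arctan (-s) := fun s => by
    rw [arctan_neg, sub_neg_eq_add]
  simp_rw [hreflect]
  rw [integral_comp_neg_Iic (f := fun x => (π / 2 - arctan x) ^ 2), neg_zero]
  exact integral_Ioi_pi_div_two_sub_arctan_sq
end

section
/- The one-dimensional Schrödinger quadratic form v ↦ ∫_ℝ (|v'|² + ρ|v|² + 2(g-1)|v|²) dt is nonnegative on C_0^∞(ℝ), where g(t) = 1 for |t| > l and g(t) = 1/4 for |t| ≤ l, provided that for all v ∈ C_0^∞(ℝ): ∫_{-l}^{l} |v|² dt ≤ (8l/κ)(∫_ℝ ρ|v|² + ∫_ℝ |v'|²) and l ≤ κ/12. -/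
open MeasureTheory Real

theorem stmt6 (l κ : ℝ) (hl : 0 < l) (hκ : 0 < κ)
    (ρ : ℝ → ℝ) (hρmeas : Measurable ρ) (hρpos : ∀ t, 0 ≤ ρ t)
    (g : ℝ → ℝ) (hg : ∀ t, g t = if |t| ≤ l then 1 / 4 else 1)
    (hmain : ∀ v : ℝ → ℝ, ContDiff ℝ (⊤ : ℕ∞) v → HasCompactSupport v →
      (∫ t in Set.Ioo (-l) l, (v t) ^ 2)
        ≤ (8 * l / κ) * ((∫ t, ρ t * (v t) ^ 2) + ∫ t, (deriv v t) ^ 2))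
    (hll : l ≤ κ / 12) :
    ∀ v : ℝ → ℝ, ContDiff ℝ (⊤ : ℕ∞) v → HasCompactSupport v →
      0 ≤ ∫ t, ((deriv v t) ^ 2 + ρ t * (v t) ^ 2 + 2 * (g t - 1) * (v t) ^ 2) := by
  intro v hv hsupp
  have hvc : Continuous v := hv.continuous
  -- v^2 is integrable
  have hsupp2 : HasCompactSupport (fun t => v t ^ 2) := by
    have := hsupp.mul_right (f' := v)
    convert this using 1
    rfl
    funext t; simp [sq]
  have hv2int : Integrable (fun t => v t ^ 2) :=
    (hvc.pow 2).integrable_of_hasCompactSupport hsupp2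
  -- (deriv v)^2 is integrable
  have hdc : Continuous (deriv v) := hv.continuous_deriv (by simp)
  have hdsupp : HasCompactSupport (deriv v) := hsupp.deriv
  have hdsupp2 : HasCompactSupport (fun t => (deriv v t) ^ 2) := by
    have := hdsupp.mul_right (f' := deriv v)
    convert this using 1
    rfl
    funext t; simp [sq]
  have hf1int : Integrable (fun t => (deriv v t) ^ 2) :=
    (hdc.pow 2).integrable_of_hasCompactSupport hdsupp2
  -- measurability of g
  have hgfun : g = fun t => if |t| ≤ l then 1 / 4 else 1 := funext hg
  have hS : MeasurableSet {t : ℝ | |t| ≤ l} :=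
    (isClosed_le continuous_abs continuous_const).measurableSet
  have hgmeas : Measurable g := by
    rw [hgfun]
    exact Measurable.ite hS measurable_const measurable_const
  -- integrability of f3
  have hf3meas : Measurable (fun t => 2 * (g t - 1) * v t ^ 2) :=
    ((measurable_const.mul (hgmeas.sub measurable_const))).mul ((hvc.pow 2).measurable)
  have hf3int : Integrable (fun t => 2 * (g t - 1) * v t ^ 2) := by
    refine Integrable.mono' (hv2int.const_mul (3/2)) hf3meas.aestronglyMeasurable
      (Filter.Eventually.of_forall fun t => ?_)
    rw [hg t]
    have h34 : |(4:ℝ)⁻¹ - 1| = 3/4 := by rw [abs_of_nonpos] <;> norm_num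
    by_cases h : |t| ≤ l <;>
      simp [h, Real.norm_eq_abs, abs_mul, h34, abs_of_nonneg (sq_nonneg (v t))] <;>
      nlinarith [sq_nonneg (v t)]
  -- value of ∫ f3
  have hf3val : (∫ t, 2 * (g t - 1) * v t ^ 2)
      = -(3/2) * ∫ t in Set.Ioo (-l) l, v t ^ 2 := by
    have h1 : (fun t => 2 * (g t - 1) * v t ^ 2)
        = Set.indicator (Set.Icc (-l) l) (fun t => -(3/2) * v t ^ 2) := by
      funext t
      rw [hg t]
      by_cases h : |t| ≤ l
      · rw [Set.indicator_of_mem (by simpa [Set.mem_Icc] using abs_le.mp h)]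
        simp [h]; ring
      · rw [Set.indicator_of_notMem (by simpa [Set.mem_Icc, ← abs_le] using h)]
        simp [h]
    rw [h1, integral_indicator measurableSet_Icc, integral_Icc_eq_integral_Ioo,
      integral_const_mul]
  have hIρ : 0 ≤ ∫ t, ρ t * v t ^ 2 :=
    integral_nonneg fun t => mul_nonneg (hρpos t) (sq_nonneg _)
  have hI1 : 0 ≤ ∫ t, (deriv v t) ^ 2 := integral_nonneg fun t => sq_nonneg _
  by_cases hρint : Integrable (fun t => ρ t * v t ^ 2)
  · have hsplit : (∫ t, ((deriv v t) ^ 2 + ρ t * (v t) ^ 2 + 2 * (g t - 1) * (v t) ^ 2))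
        = (∫ t, (deriv v t) ^ 2) + (∫ t, ρ t * v t ^ 2) + (∫ t, 2 * (g t - 1) * v t ^ 2) := by
      have hadd1 : Integrable (fun t => (deriv v t) ^ 2 + ρ t * v t ^ 2) :=
        hf1int.add hρint
      have h0 : (∫ t, (((deriv v t) ^ 2 + ρ t * v t ^ 2) + 2 * (g t - 1) * v t ^ 2))
          = (∫ t, ((deriv v t) ^ 2 + ρ t * v t ^ 2)) + ∫ t, 2 * (g t - 1) * v t ^ 2 :=
        integral_add hadd1 hf3int
      have h1 : (∫ t, ((deriv v t) ^ 2 + ρ t * v t ^ 2))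
          = (∫ t, (deriv v t) ^ 2) + ∫ t, ρ t * v t ^ 2 := integral_add hf1int hρint
      rw [h0, h1]
    rw [hsplit, hf3val]
    have hJ := hmain v hv hsupp
    have hc : 8 * l / κ ≤ 2 / 3 := by
      rw [div_le_iff₀ hκ]; linarith
    have h2 : (∫ t in Set.Ioo (-l) l, v t ^ 2)
        ≤ (2/3) * ((∫ t, ρ t * v t ^ 2) + ∫ t, (deriv v t) ^ 2) :=
      le_trans hJ (mul_le_mul_of_nonneg_right hc (by linarith))
    linarith
  · have hnot : ¬ Integrable (fun t => (deriv v t) ^ 2 + ρ t * (v t) ^ 2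
        + 2 * (g t - 1) * (v t) ^ 2) := by
      intro h
      apply hρint
      have h2 : Integrable (fun t =>
          ((deriv v t) ^ 2 + ρ t * v t ^ 2 + 2 * (g t - 1) * v t ^ 2) - (deriv v t) ^ 2) :=
        h.sub hf1int
      have h3 : Integrable (fun t =>
          (((deriv v t) ^ 2 + ρ t * v t ^ 2 + 2 * (g t - 1) * v t ^ 2) - (deriv v t) ^ 2)
            - 2 * (g t - 1) * v t ^ 2) := h2.sub hf3int
      refine h3.congr (Filter.Eventually.of_forall fun t => ?_)
      ring
    rw [integral_undef hnot]
end

section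
/- For a function f ∈ C^∞([0, π]) with f(π) = 0, the inequality ∫_0^π |f'(x)|² dx ≥ (1/4) ∫_0^π |f(x)|² dx holds. -/
open MeasureTheory Real Filter Set

theorem stmt8 (f : ℝ → ℝ) (hf : ContDiff ℝ (⊤ : ℕ∞) f) (hfπ : f π = 0) :
    (1 / 4) * ∫ x in Set.Ioo (0 : ℝ) π, (f x) ^ 2
      ≤ ∫ x in Set.Ioo (0 : ℝ) π, (deriv f x) ^ 2 := by
  have hπ : (0:ℝ) < π := Real.pi_pos
  have hfc : Continuous f := hf.continuous
  have hf' : Continuous (deriv f) := hf.continuous_deriv (by simp)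
  have hdiff : Differentiable ℝ f := hf.differentiable (by simp)
  set A : ℝ → ℝ := fun b => ∫ x in (0:ℝ)..b, (deriv f x) ^ 2 with hA
  set B : ℝ → ℝ := fun b => ∫ x in (0:ℝ)..b, (f x) ^ 2 with hB
  set c : ℝ → ℝ := fun b => (1/2) * f b ^ 2 * tan (b/2) with hc
  -- key inequality for b ∈ Ioo 0 π
  have key : ∀ b ∈ Ioo (0:ℝ) π, -(c b) ≤ A b - (1/4) * B b := by
    intro b hb
    have hcos : ∀ x ∈ uIcc (0:ℝ) b, Real.cos (x/2) ≠ 0 := by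
      intro x hx
      rw [uIcc_of_le hb.1.le] at hx
      have h1 : x/2 ∈ Ioo (-(π/2)) (π/2) := by
        constructor
        · nlinarith [hx.1]
        · nlinarith [hx.2, hb.2]
      exact (Real.cos_pos_of_mem_Ioo h1).ne'
    have htan : ∀ x ∈ uIcc (0:ℝ) b, HasDerivAt (fun y => Real.tan (y/2))
        (1 / Real.cos (x/2) ^ 2 * (1/2)) x := by
      intro x hx
      exact (Real.hasDerivAt_tan (hcos x hx)).comp x ((hasDerivAt_id x).div_const 2)
    set G : ℝ → ℝ := fun x =>
      (deriv f x + (1/2) * f x * tan (x/2)) ^ 2 - (deriv f x) ^ 2 + (1/4) * f x ^ 2 with hG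
    have hFder : ∀ x ∈ uIcc (0:ℝ) b,
        HasDerivAt (fun y => (1/2) * f y ^ 2 * tan (y/2)) (G x) x := by
      intro x hx
      have h1 : HasDerivAt (fun y => (1/2) * f y ^ 2)
          ((1/2) * (2 * f x * deriv f x)) x :=
        (((hdiff x).hasDerivAt.pow 2).const_mul (1/2)).congr_deriv (by ring)
      have h2 := h1.mul (htan x hx)
      refine h2.congr_deriv ?_
      have hc0 := hcos x hx
      have hsc := Real.sin_sq_add_cos_sq (x/2)
      have h3 : 1 / Real.cos (x/2) ^ 2 = Real.tan (x/2) ^ 2 + 1 := by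
        rw [Real.tan_eq_sin_div_cos, div_pow]
        field_simp
        exact hsc.symm
      rw [hG]
      simp only [h3]
      ring
    have htanc : ContinuousOn (fun y => Real.tan (y/2)) (uIcc (0:ℝ) b) :=
      fun x hx => ((htan x hx).continuousAt).continuousWithinAt
    have hwc : ContinuousOn (fun x => deriv f x + (1/2) * f x * tan (x/2)) (uIcc (0:ℝ) b) :=
      hf'.continuousOn.add ((continuousOn_const.mul hfc.continuousOn).mul htanc)
    have hGc : ContinuousOn G (uIcc (0:ℝ) b) :=
      ((hwc.pow 2).sub ((hf'.continuousOn).pow 2)).add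
        (continuousOn_const.mul (hfc.continuousOn.pow 2))
    have hGint : IntervalIntegrable G volume 0 b := hGc.intervalIntegrable
    have hftc := intervalIntegral.integral_eq_sub_of_hasDerivAt hFder hGint
    have hS : IntervalIntegrable (fun x => (deriv f x + (1/2) * f x * tan (x/2)) ^ 2) volume 0 b :=
      (hwc.pow 2).intervalIntegrable
    have hI1 : IntervalIntegrable (fun x => (deriv f x) ^ 2) volume 0 b :=
      (hf'.pow 2).intervalIntegrable 0 b
    have hI2 : IntervalIntegrable (fun x => (1/4) * f x ^ 2) volume 0 b :=
      (continuous_const.mul (hfc.pow 2)).intervalIntegrable 0 b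
    have hsplit : (∫ x in (0:ℝ)..b, G x)
        = (∫ x in (0:ℝ)..b, (deriv f x + (1/2) * f x * tan (x/2)) ^ 2)
          - A b + (1/4) * B b := by
      rw [hG, hA, hB]
      rw [intervalIntegral.integral_add (hS.sub hI1) hI2,
        intervalIntegral.integral_sub hS hI1, intervalIntegral.integral_const_mul]
    have hSnn : 0 ≤ ∫ x in (0:ℝ)..b, (deriv f x + (1/2) * f x * tan (x/2)) ^ 2 :=
      intervalIntegral.integral_nonneg hb.1.le (fun x _ => sq_nonneg _)
    have hF0 : (1/2) * f 0 ^ 2 * tan (0/2) = 0 := by norm_num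
    rw [hsplit] at hftc
    have : c b = (1/2) * f b ^ 2 * tan (b/2) := rfl
    linarith [hftc, hSnn, hF0]
  -- continuity of primitives
  have hAc : Continuous A :=
    intervalIntegral.continuous_primitive (fun a b => (hf'.pow 2).intervalIntegrable a b) 0
  have hBc : Continuous B :=
    intervalIntegral.continuous_primitive (fun a b => (hfc.pow 2).intervalIntegrable a b) 0
  -- limit of c at π from the left is 0
  have hcos_slope : Tendsto (slope (fun x => Real.cos (x/2)) π) (nhdsWithin π {π}ᶜ)
      (nhds (-(1/2))) := by
    have h : HasDerivAt (fun x => Real.cos (x/2)) (-(Real.sin (π/2)) * (1/2)) π :=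
      ((hasDerivAt_id' π).div_const 2).cos
    have h2 := hasDerivAt_iff_tendsto_slope.mp h
    simpa using h2
  have hf_slope : Tendsto (slope f π) (nhdsWithin π {π}ᶜ) (nhds (deriv f π)) :=
    hasDerivAt_iff_tendsto_slope.mp (hdiff π).hasDerivAt
  have hquot : Tendsto (fun b => f b / Real.cos (b/2)) (nhdsWithin π (Iio π))
      (nhds (deriv f π / (-(1/2)))) := by
    have h1 : Tendsto (fun b => slope f π b / slope (fun x => Real.cos (x/2)) π b)
        (nhdsWithin π {π}ᶜ) (nhds (deriv f π / (-(1/2)))) :=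
      hf_slope.div hcos_slope (by norm_num)
    have h2 := h1.mono_left (nhdsWithin_mono π (fun x hx => ne_of_lt hx))
    apply h2.congr'
    filter_upwards [self_mem_nhdsWithin] with b hb
    have hbne : b - π ≠ 0 := sub_ne_zero.mpr (ne_of_lt hb)
    simp only [slope_def_field]
    rw [hfπ, Real.cos_pi_div_two, sub_zero, sub_zero]
    by_cases hcb : Real.cos (b/2) = 0
    · simp [hcb]
    · field_simp
  have hclim : Tendsto c (nhdsWithin π (Iio π)) (nhds 0) := by
    have hsin : Tendsto (fun b => f b * Real.sin (b/2)) (nhdsWithin π (Iio π))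
        (nhds (f π * Real.sin (π/2))) :=
      ((hfc.tendsto π).mul ((Real.continuous_sin.comp (continuous_id.div_const 2)).tendsto π)).mono_left
        nhdsWithin_le_nhds
    have h1 : Tendsto (fun b => (1/2) * (f b / Real.cos (b/2)) * (f b * Real.sin (b/2)))
        (nhdsWithin π (Iio π))
        (nhds ((1/2) * (deriv f π / (-(1/2))) * (f π * Real.sin (π/2)))) :=
      (tendsto_const_nhds.mul hquot).mul hsin
    have h2 : (1/2) * (deriv f π / (-(1/2))) * (f π * Real.sin (π/2)) = 0 := by
      rw [hfπ]; ring
    rw [h2] at h1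
    apply h1.congr
    intro b
    rw [hc]
    simp only [Real.tan_eq_sin_div_cos]
    ring
  have hABlim : Tendsto (fun b => A b - (1/4) * B b) (nhdsWithin π (Iio π))
      (nhds (A π - (1/4) * B π)) :=
    ((hAc.tendsto π).sub (tendsto_const_nhds.mul (hBc.tendsto π))).mono_left nhdsWithin_le_nhds
  have hev : ∀ᶠ b in nhdsWithin π (Iio π), -(c b) ≤ A b - (1/4) * B b := by
    filter_upwards [Ioo_mem_nhdsLT_of_mem (⟨hπ, le_refl π⟩ : π ∈ Ioc 0 π)] with b hb
    exact key b hb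
  have hneg : Tendsto (fun b => -(c b)) (nhdsWithin π (Iio π)) (nhds 0) := by
    simpa using hclim.neg
  have hfinal : (0:ℝ) ≤ A π - (1/4) * B π :=
    le_of_tendsto_of_tendsto hneg hABlim hev
  have e1 : A π = ∫ x in Set.Ioo (0:ℝ) π, (deriv f x) ^ 2 := by
    simp only [hA]
    rw [intervalIntegral.integral_of_le hπ.le, integral_Ioc_eq_integral_Ioo]
  have e2 : B π = ∫ x in Set.Ioo (0:ℝ) π, (f x) ^ 2 := by
    simp only [hB]
    rw [intervalIntegral.integral_of_le hπ.le, integral_Ioc_eq_integral_Ioo]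
  rw [← e1, ← e2]
  linarith
end
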